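/- Let M be an n-dimensional, paracompact, connected, Hausdorff, smooth manifold with abstract boundary B(M), and let M̄ = M ∪ B(M). The collection V consisting of (i) all sets A = U ∪ B_U, where U is a nonempty open subset of M and B_U is the set of all abstract boundary points attached to U, and (ii) all subsets C ⊆ B(M), forms a basis for a topology on M̄: the elements of V cover M̄, and for any two elements V₁, V₂ ∈ V and any x ∈ V₁ ∩ V₂ there exists V₃ ∈ V with x ∈ V₃ ⊆ V₁ ∩ V₂. -/

import Mathlib

open scoped Manifold
open Topology

/-- An envelopment of the `n`-dimensional, paracompact, connected, Hausdorff, smooth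
manifold `M`: a `C^∞` embedding of `M` into a smooth `n`-manifold with the same properties. -/
structure Envelopment (n : ℕ) (M : Type) [TopologicalSpace M]
    [ChartedSpace (EuclideanSpace ℝ (Fin n)) M] : Type 1 where
  carrier : Type
  [top : TopologicalSpace carrier]
  [cs : ChartedSpace (EuclideanSpace ℝ (Fin n)) carrier]
  [sm : IsManifold (𝓡 n) ((⊤ : ℕ∞) : WithTop ℕ∞) carrier]
  [t2 : T2Space carrier]
  [para : ParacompactSpace carrier]
  [conn : ConnectedSpace carrier]
  embMap : M → carrier
  isEmbedding : Topology.IsEmbedding embMap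
  contMDiff : ContMDiff (𝓡 n) (𝓡 n) (⊤ : ℕ∞) embMap

attribute [instance] Envelopment.top Envelopment.cs Envelopment.sm
  Envelopment.t2 Envelopment.para Envelopment.conn

variable {n : ℕ} {M : Type} [TopologicalSpace M]
  [ChartedSpace (EuclideanSpace ℝ (Fin n)) M]

/-- The set of boundary points `∂(φ(M)) = closure (φ(M)) \ φ(M)` of an envelopment. -/
def Envelopment.bdry (e : Envelopment n M) : Set e.carrier :=
  closure (Set.range e.embMap) \ Set.range e.embMap

/-- A boundary set: a nonempty subset of the set of boundary points of some envelopment. -/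
structure BoundarySet (n : ℕ) (M : Type) [TopologicalSpace M]
    [ChartedSpace (EuclideanSpace ℝ (Fin n)) M] : Type 1 where
  env : Envelopment n M
  B : Set env.carrier
  nonempty : B.Nonempty
  subset_bdry : B ⊆ env.bdry

/-- `Covers b b'`: for every open neighbourhood `N` of `b.B` there is an open
neighbourhood `N'` of `b'.B` with `φ (φ'⁻¹ (N' ∩ φ'(M))) ⊆ N`. -/
def Covers (b b' : BoundarySet n M) : Prop :=
  ∀ N : Set b.env.carrier, IsOpen N → b.B ⊆ N →
    ∃ N' : Set b'.env.carrier, IsOpen N' ∧ b'.B ⊆ N' ∧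
      b.env.embMap '' (b'.env.embMap ⁻¹' N') ⊆ N

/-- Two boundary sets are equivalent if each covers the other. -/
def BEquiv (b b' : BoundarySet n M) : Prop := Covers b b' ∧ Covers b' b

/-- A boundary set whose underlying set is a singleton `{p}`. -/
def BoundarySet.IsSingletonRep (b : BoundarySet n M) : Prop := ∃ p, b.B = {p}

/-- The abstract boundary `B(M)`: equivalence classes of boundary sets (under mutual
covering) which possess a singleton representative. -/
def AbstractBoundary (n : ℕ) (M : Type) [TopologicalSpace M]
    [ChartedSpace (EuclideanSpace ℝ (Fin n)) M] : Type 1 :=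
  {q : Quot (@BEquiv n M _ _) // ∃ b : BoundarySet n M,
    b.IsSingletonRep ∧ Quot.mk BEquiv b = q}

/-- A boundary set `B` is attached to an open set `U ⊆ M` if every open neighbourhood
of `B` in the enveloping manifold meets `φ(U)`. -/
def BoundarySet.Attached (b : BoundarySet n M) (U : Set M) : Prop :=
  ∀ N : Set b.env.carrier, IsOpen N → b.B ⊆ N → (N ∩ b.env.embMap '' U).Nonempty

/-- An abstract boundary point `[p]` is attached to the open set `U ⊆ M` if a singleton
boundary point representative `p` of it is attached to `U` (this is independent of the
chosen representative). -/
def AbstractBoundary.Attached (q : AbstractBoundary n M) (U : Set M) : Prop :=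
  ∃ b : BoundarySet n M, b.IsSingletonRep ∧ Quot.mk BEquiv b = q.1 ∧ b.Attached U

/-- The basis `𝒱` for the attached point topology on `M̄ = M ⊕ B(M)`: all sets
`U ∪ B_U` with `U` a nonempty open subset of `M` and `B_U` the set of all abstract
boundary points attached to `U`, together with all subsets `C ⊆ B(M)`. -/
def basisSets (n : ℕ) (M : Type) [TopologicalSpace M]
    [ChartedSpace (EuclideanSpace ℝ (Fin n)) M] :
    Set (Set (M ⊕ AbstractBoundary n M)) :=
  {A | ∃ U : Set M, IsOpen U ∧ U.Nonempty ∧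
      A = Sum.inl '' U ∪ Sum.inr '' {q : AbstractBoundary n M | q.Attached U}} ∪
  {A | ∃ C : Set (AbstractBoundary n M), A = Sum.inr '' C}

/-- The attached point topology on `M̄ = M ⊕ B(M)`: the topology generated by the
basis `𝒱`. -/
def attachedTopology (n : ℕ) (M : Type) [TopologicalSpace M]
    [ChartedSpace (EuclideanSpace ℝ (Fin n)) M] :
    TopologicalSpace (M ⊕ AbstractBoundary n M) :=
  TopologicalSpace.generateFrom (basisSets n M)

lemma attached_mono {q : AbstractBoundary n M} {U U' : Set M}
    (h : q.Attached U) (hUU : U ⊆ U') : q.Attached U' := by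
  obtain ⟨b, hs, hq, hb⟩ := h
  refine ⟨b, hs, hq, fun N hN hBN => (hb N hN hBN).mono
    (Set.inter_subset_inter_right _ (Set.image_mono hUU))⟩

/-- The collection `𝒱`, consisting of all sets `U ∪ B_U` (with `U` a nonempty open
subset of `M` and `B_U` the set of all abstract boundary points attached to `U`)
together with all subsets `C ⊆ B(M)`, is a basis for a topology on `M̄ = M ∪ B(M)`:
its elements cover `M̄`, and any point of the intersection of two elements lies in a
third element contained in that intersection. -/
theorem basisSets_is_basis (n : ℕ) (M : Type) [TopologicalSpace M]
    [ChartedSpace (EuclideanSpace ℝ (Fin n)) M] [IsManifold (𝓡 n) ((⊤ : ℕ∞) : WithTop ℕ∞) M]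
    [T2Space M] [ParacompactSpace M] [ConnectedSpace M] :
    ⋃₀ basisSets n M = Set.univ ∧
    ∀ V₁ ∈ basisSets n M, ∀ V₂ ∈ basisSets n M, ∀ x ∈ V₁ ∩ V₂,
      ∃ V₃ ∈ basisSets n M, x ∈ V₃ ∧ V₃ ⊆ V₁ ∩ V₂ := by
  constructor
  · ext x
    simp only [Set.mem_sUnion, Set.mem_univ, iff_true]
    cases x with
    | inl m =>
      exact ⟨Sum.inl '' (Set.univ : Set M) ∪
        Sum.inr '' {q : AbstractBoundary n M | q.Attached Set.univ},
        Or.inl ⟨Set.univ, isOpen_univ, ⟨m, trivial⟩, rfl⟩,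
        Or.inl ⟨m, trivial, rfl⟩⟩
    | inr q =>
      exact ⟨Sum.inr '' Set.univ, Or.inr ⟨Set.univ, rfl⟩, ⟨q, trivial, rfl⟩⟩
  · rintro V₁ h₁ V₂ h₂ x ⟨hx1, hx2⟩
    cases x with
    | inr q =>
      refine ⟨Sum.inr '' {q}, Or.inr ⟨{q}, rfl⟩, ⟨q, rfl, rfl⟩, ?_⟩
      rintro y ⟨q', hq', rfl⟩
      cases hq'
      exact ⟨hx1, hx2⟩
    | inl m =>
      rcases h₁ with ⟨U₁, hU₁o, hU₁n, rfl⟩ | ⟨C, rfl⟩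
      · rcases h₂ with ⟨U₂, hU₂o, hU₂n, rfl⟩ | ⟨C, rfl⟩
        · have hm₁ : m ∈ U₁ := by
            rcases hx1 with ⟨m', hm', heq⟩ | ⟨q, hq, heq⟩
            · cases heq; exact hm'
            · exact absurd heq (by simp)
          have hm₂ : m ∈ U₂ := by
            rcases hx2 with ⟨m', hm', heq⟩ | ⟨q, hq, heq⟩
            · cases heq; exact hm'
            · exact absurd heq (by simp)
          refine ⟨Sum.inl '' (U₁ ∩ U₂) ∪
            Sum.inr '' {q : AbstractBoundary n M | q.Attached (U₁ ∩ U₂)},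
            Or.inl ⟨U₁ ∩ U₂, hU₁o.inter hU₂o, ⟨m, hm₁, hm₂⟩, rfl⟩,
            Or.inl ⟨m, ⟨hm₁, hm₂⟩, rfl⟩, ?_⟩
          rintro y (⟨m', ⟨h1, h2⟩, rfl⟩ | ⟨q, hq, rfl⟩)
          · exact ⟨Or.inl ⟨m', h1, rfl⟩, Or.inl ⟨m', h2, rfl⟩⟩
          · exact ⟨Or.inr ⟨q, attached_mono hq Set.inter_subset_left, rfl⟩,
              Or.inr ⟨q, attached_mono hq Set.inter_subset_right, rfl⟩⟩
        · rcases hx2 with ⟨q, hq, heq⟩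
          exact absurd heq (by simp)
      · rcases hx1 with ⟨q, hq, heq⟩
        exact absurd heq (by simp)
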